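/- arXiv:2211.08011 — 4 statements merged into one kernel-verified Lean document; each statement's English description precedes it below -/
import Mathlib

section
/- Let (P, x_L, x_R) and (Q, y_L, y_R) be finite oriented posets with weight functions into a commutative ring R. Then the down weight matrix of the glued oriented poset P↘Q (with left vertex x_L and right vertex y_R) is the product of the down weight matrices of the pieces: M_w((P↘Q)↘) = M_w(P↘) · M_w(Q↘), where the right-hand side is the product of 2×2 matrices over R. -/
open Classical Relation

noncomputable section

variable {R : Type*} [CommRing R]

/-- A finite set `I` is a lower set (order ideal) for the relation `r`. -/
def IsLowerSetRel {α : Type*} (r : α → α → Prop) (I : Finset α) : Prop :=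
  ∀ x ∈ I, ∀ y, r y x → y ∈ I

/-- The sum of the weights `∏ i ∈ I, w i` over all lower sets `I` of the relation `r`
satisfying the condition `C`.  Taking `C = fun _ => True` gives the weight polynomial. -/
def wSum {α : Type*} [Fintype α] (r : α → α → Prop) (w : α → R) (C : Finset α → Prop) : R :=
  ∑ I ∈ Finset.univ.filter (fun I : Finset α => IsLowerSetRel r I ∧ C I), ∏ i ∈ I, w i

/-- The down weight matrix `M_w(P↘)` of an oriented poset `(P, xL, xR)`. -/
def downMat {α : Type*} [Fintype α] (r : α → α → Prop) (w : α → R) (xL xR : α) :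
    Matrix (Fin 2) (Fin 2) R :=
  !![wSum r w (fun _ => True), -wSum r w (fun I => xR ∈ I);
     wSum r w (fun I => xL ∉ I), -wSum r w (fun I => xR ∈ I ∧ xL ∉ I)]

/-- The up weight matrix `M_w(P↗)` of an oriented poset `(P, xL, xR)`. -/
def upMat {α : Type*} [Fintype α] (r : α → α → Prop) (w : α → R) (xL xR : α) :
    Matrix (Fin 2) (Fin 2) R :=
  !![wSum r w (fun I => xR ∈ I), wSum r w (fun I => xR ∉ I);
     wSum r w (fun I => xR ∈ I ∧ xL ∉ I), wSum r w (fun I => xR ∉ I ∧ xL ∉ I)]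

/-- The order relation of the glued poset `P↘Q` on the disjoint union `P ⊔ Q`:
elements of `P` (resp. `Q`) compare as in `P` (resp. `Q`), an element `a ∈ Q` lies below
`b ∈ P` iff `a ≤ yL` in `Q` and `xR ≤ b` in `P`, and no element of `P` lies below an
element of `Q`. -/
def glueDown {α β : Type*} (rP : α → α → Prop) (rQ : β → β → Prop) (xR : α) (yL : β) :
    α ⊕ β → α ⊕ β → Prop
  | .inl a, .inl b => rP a b
  | .inr a, .inr b => rQ a b
  | .inr a, .inl b => rQ a yL ∧ rP xR b
  | .inl _, .inr _ => False

/-- The order relation of the glued poset `P↗Q` on the disjoint union `P ⊔ Q`: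
elements of `P` (resp. `Q`) compare as in `P` (resp. `Q`), an element `a ∈ P` lies below
`b ∈ Q` iff `a ≤ xR` in `P` and `yL ≤ b` in `Q`, and no element of `Q` lies below an
element of `P`. -/
def glueUp {α β : Type*} (rP : α → α → Prop) (rQ : β → β → Prop) (xR : α) (yL : β) :
    α ⊕ β → α ⊕ β → Prop
  | .inl a, .inl b => rP a b
  | .inr a, .inr b => rQ a b
  | .inl a, .inr b => rP a xR ∧ rQ yL b
  | .inr _, .inl _ => False
lemma wSum_congr {α : Type*} [Fintype α] (r : α → α → Prop) (w : α → R)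
    {C1 C2 : Finset α → Prop} (h : ∀ I, C1 I ↔ C2 I) :
    wSum r w C1 = wSum r w C2 := by
  unfold wSum
  congr 1
  apply Finset.filter_congr
  intro I _
  rw [h I]

lemma wSum_eq_sum_ite {α : Type*} [Fintype α] (r : α → α → Prop) (w : α → R)
    (C : Finset α → Prop) :
    wSum r w C = ∑ I : Finset α, if IsLowerSetRel r I ∧ C I then ∏ i ∈ I, w i else 0 := by
  rw [wSum, Finset.sum_filter]

lemma isLowerSetRel_glueDown_iff {α β : Type*} [Preorder α] [Preorder β]
    (xR : α) (yL : β) (J : Finset (α ⊕ β)) :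
    IsLowerSetRel (glueDown (· ≤ · : α → α → Prop) (· ≤ · : β → β → Prop) xR yL) J ↔
      IsLowerSetRel (· ≤ ·) J.toLeft ∧ IsLowerSetRel (· ≤ ·) J.toRight ∧
        (xR ∈ J.toLeft → yL ∈ J.toRight) := by
  constructor
  · intro h
    refine ⟨fun x hx y hy => ?_, fun x hx y hy => ?_, fun hx => ?_⟩
    · simpa using h (Sum.inl x) (by simpa using hx) (Sum.inl y) hy
    · simpa using h (Sum.inr x) (by simpa using hx) (Sum.inr y) hy
    · simpa using h (Sum.inl xR) (by simpa using hx) (Sum.inr yL) ⟨le_refl _, le_refl _⟩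
  · rintro ⟨hP, hQ, hlink⟩ x hx y hxy
    match x, y with
    | Sum.inl a, Sum.inl b =>
      simpa using hP a (by simpa using hx) b hxy
    | Sum.inr a, Sum.inr b =>
      simpa using hQ a (by simpa using hx) b hxy
    | Sum.inl a, Sum.inr b =>
      obtain ⟨h1, h2⟩ := hxy
      have hxR : xR ∈ J.toLeft := hP a (by simpa using hx) xR h2
      have hyL : yL ∈ J.toRight := hlink hxR
      simpa using hQ yL hyL b h1
    | Sum.inr a, Sum.inl b => exact absurd hxy not_false

/-- Key product formula for the glued weight sum. -/
lemma wSum_glueDown_key {α β : Type*} [Fintype α] [Fintype β]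
    [PartialOrder α] [PartialOrder β] (wP : α → R) (wQ : β → R)
    (xR : α) (yL : β) (CP : Finset α → Prop) (CQ : Finset β → Prop) :
    wSum (glueDown (· ≤ · : α → α → Prop) (· ≤ · : β → β → Prop) xR yL)
        (Sum.elim wP wQ) (fun J => CP J.toLeft ∧ CQ J.toRight) =
      wSum (· ≤ ·) wP CP * wSum (· ≤ ·) wQ CQ -
        wSum (· ≤ ·) wP (fun I => CP I ∧ xR ∈ I) *
          wSum (· ≤ ·) wQ (fun K => CQ K ∧ yL ∉ K) := by
  let e : Finset α × Finset β ≃ Finset (α ⊕ β) :=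
    { toFun := fun p => p.1.disjSum p.2
      invFun := fun J => (J.toLeft, J.toRight)
      left_inv := fun p => by simp
      right_inv := fun J => Finset.toLeft_disjSum_toRight }
  have h1 : wSum (glueDown (· ≤ · : α → α → Prop) (· ≤ · : β → β → Prop) xR yL)
        (Sum.elim wP wQ) (fun J => CP J.toLeft ∧ CQ J.toRight)
      = ∑ p : Finset α × Finset β,
          if (IsLowerSetRel (· ≤ ·) p.1 ∧ CP p.1) ∧ (IsLowerSetRel (· ≤ ·) p.2 ∧ CQ p.2)
              ∧ (xR ∈ p.1 → yL ∈ p.2)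
          then (∏ i ∈ p.1, wP i) * ∏ j ∈ p.2, wQ j else 0 := by
    rw [wSum_eq_sum_ite]
    refine (Fintype.sum_equiv e _ _ fun p => ?_).symm
    have he : e p = p.1.disjSum p.2 := rfl
    simp only [he, isLowerSetRel_glueDown_iff, Finset.toLeft_disjSum,
      Finset.toRight_disjSum, Finset.prod_disjSum, Sum.elim_inl, Sum.elim_inr]
    exact if_congr (by tauto) rfl rfl
  rw [h1, wSum_eq_sum_ite, wSum_eq_sum_ite, wSum_eq_sum_ite, wSum_eq_sum_ite,
    Finset.sum_mul_sum, Finset.sum_mul_sum, Fintype.sum_prod_type,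
    ← Finset.sum_sub_distrib]
  simp only [← Finset.sum_sub_distrib]
  apply Finset.sum_congr rfl
  intro I _
  apply Finset.sum_congr rfl
  intro K _
  by_cases h1 : IsLowerSetRel (· ≤ · : α → α → Prop) I
  · by_cases h2 : IsLowerSetRel (· ≤ · : β → β → Prop) K
    · by_cases h3 : CP I
      · by_cases h4 : CQ K
        · by_cases h5 : xR ∈ I
          · by_cases h6 : yL ∈ K
            · simp [h1, h2, h3, h4, h5, h6]
            · simp [h1, h2, h3, h4, h5, h6]
          · simp [h1, h2, h3, h4, h5]
        · simp [h4]
      · simp [h3]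
    · simp [h2]
  · simp [h1]

/-- `M_w((P↘Q)↘) = M_w(P↘) · M_w(Q↘)`. -/
theorem downMat_glueDown {α β : Type*} [Fintype α] [Fintype β]
    [PartialOrder α] [PartialOrder β] (wP : α → R) (wQ : β → R)
    (xL xR : α) (yL yR : β) :
    downMat (glueDown (· ≤ · : α → α → Prop) (· ≤ · : β → β → Prop) xR yL)
        (Sum.elim wP wQ) (Sum.inl xL) (Sum.inr yR) =
      downMat (· ≤ ·) wP xL xR * downMat (· ≤ ·) wQ yL yR := by
  have key := wSum_glueDown_key (R := R) wP wQ xR yL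
  have h00 : wSum (glueDown (· ≤ · : α → α → Prop) (· ≤ · : β → β → Prop) xR yL)
        (Sum.elim wP wQ) (fun _ => True)
      = wSum (· ≤ ·) wP (fun _ => True) * wSum (· ≤ ·) wQ (fun _ => True)
        - wSum (· ≤ ·) wP (fun I => xR ∈ I) * wSum (· ≤ ·) wQ (fun I => yL ∉ I) := by
    have h := key (fun _ => True) (fun _ => True)
    simp only [true_and, and_true, and_self] at h ⊢
    exact h
  have h01 : wSum (glueDown (· ≤ · : α → α → Prop) (· ≤ · : β → β → Prop) xR yL)
        (Sum.elim wP wQ) (fun I => Sum.inr yR ∈ I)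
      = wSum (· ≤ ·) wP (fun _ => True) * wSum (· ≤ ·) wQ (fun I => yR ∈ I)
        - wSum (· ≤ ·) wP (fun I => xR ∈ I) *
            wSum (· ≤ ·) wQ (fun I => yR ∈ I ∧ yL ∉ I) := by
    have h := key (fun _ => True) (fun K => yR ∈ K)
    simp only [true_and, Finset.mem_toRight] at h
    exact h
  have h10 : wSum (glueDown (· ≤ · : α → α → Prop) (· ≤ · : β → β → Prop) xR yL)
        (Sum.elim wP wQ) (fun I => Sum.inl xL ∉ I)
      = wSum (· ≤ ·) wP (fun I => xL ∉ I) * wSum (· ≤ ·) wQ (fun _ => True)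
        - wSum (· ≤ ·) wP (fun I => xR ∈ I ∧ xL ∉ I) *
            wSum (· ≤ ·) wQ (fun I => yL ∉ I) := by
    have h := key (fun I => xL ∉ I) (fun _ => True)
    simp only [true_and, and_true, Finset.mem_toLeft] at h
    rw [wSum_congr (· ≤ ·) wP (C1 := fun I => xL ∉ I ∧ xR ∈ I)
      (C2 := fun I => xR ∈ I ∧ xL ∉ I) (fun I => and_comm)] at h
    exact h
  have h11 : wSum (glueDown (· ≤ · : α → α → Prop) (· ≤ · : β → β → Prop) xR yL)
        (Sum.elim wP wQ) (fun I => Sum.inr yR ∈ I ∧ Sum.inl xL ∉ I)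
      = wSum (· ≤ ·) wP (fun I => xL ∉ I) * wSum (· ≤ ·) wQ (fun I => yR ∈ I)
        - wSum (· ≤ ·) wP (fun I => xR ∈ I ∧ xL ∉ I) *
            wSum (· ≤ ·) wQ (fun I => yR ∈ I ∧ yL ∉ I) := by
    have h := key (fun I => xL ∉ I) (fun K => yR ∈ K)
    simp only [Finset.mem_toLeft, Finset.mem_toRight] at h
    rw [wSum_congr _ (Sum.elim wP wQ)
      (C1 := fun J : Finset (α ⊕ β) => Sum.inl xL ∉ J ∧ Sum.inr yR ∈ J)
      (C2 := fun J : Finset (α ⊕ β) => Sum.inr yR ∈ J ∧ Sum.inl xL ∉ J)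
      (fun J => and_comm),
      wSum_congr (· ≤ ·) wP (C1 := fun I => xL ∉ I ∧ xR ∈ I)
      (C2 := fun I => xR ∈ I ∧ xL ∉ I) (fun I => and_comm)] at h
    exact h
  unfold downMat
  rw [Matrix.mul_fin_two]
  ext i j
  fin_cases i <;> fin_cases j <;>
    simp only [Matrix.cons_val', Matrix.cons_val_zero, Matrix.cons_val_one, Matrix.head_cons,
      Matrix.empty_val', Matrix.cons_val_fin_one, Matrix.head_fin_const, Matrix.of_apply,
      Fin.zero_eta, Fin.mk_one]
  · rw [h00]; ring
  · rw [h01]; ring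
  · rw [h10]; ring
  · rw [h11]; ring
end
end

section
/- Let (P, x_L, x_R) and (Q, y_L, y_R) be finite oriented posets. The relation defining the glued poset P↘Q on the disjoint union P ⊔ Q is a partial order, and the map sending a lower set K of P↘Q to the pair (K ∩ P, K ∩ Q) is a bijection from the set of lower sets of P↘Q onto the set of pairs (I, J) where I is a lower set of P, J is a lower set of Q, and x_R ∈ I implies y_L ∈ J; moreover, under this bijection the weight of K equals w_P(I) · w_Q(J). -/
open Classical Relation

noncomputable section

variable {R : Type*} [CommRing R]

/-- The relation defining `P↘Q` is a partial order; `K ↦ (K ∩ P, K ∩ Q)`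
is a bijection from lower sets of `P↘Q` onto pairs `(I, J)` of lower sets of `P` and `Q`
with `xR ∈ I → yL ∈ J`; and the weight of `K` is `wP(I) · wQ(J)`. -/
theorem glueDown_isPartialOrder_bijOn {α β : Type*} [Fintype α] [Fintype β]
    [PartialOrder α] [PartialOrder β] (wP : α → R) (wQ : β → R)
    (xL xR : α) (yL yR : β) :
    IsPartialOrder (α ⊕ β) (glueDown (· ≤ · : α → α → Prop) (· ≤ · : β → β → Prop) xR yL) ∧
    Set.BijOn (fun K : Finset (α ⊕ β) => (K.toLeft, K.toRight))
      {K | IsLowerSetRel (glueDown (· ≤ · : α → α → Prop) (· ≤ · : β → β → Prop) xR yL) K}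
      {p : Finset α × Finset β |
        IsLowerSetRel (· ≤ ·) p.1 ∧ IsLowerSetRel (· ≤ ·) p.2 ∧ (xR ∈ p.1 → yL ∈ p.2)} ∧
    ∀ K : Finset (α ⊕ β),
      IsLowerSetRel (glueDown (· ≤ · : α → α → Prop) (· ≤ · : β → β → Prop) xR yL) K →
        ∏ i ∈ K, Sum.elim wP wQ i =
          (∏ i ∈ K.toLeft, wP i) * ∏ j ∈ K.toRight, wQ j := by
  refine ⟨?_, ⟨?_, ?_, ?_⟩, ?_⟩
  · refine { refl := ?_, trans := ?_, antisymm := ?_ }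
    · intro x; cases x <;> simp [glueDown]
    · intro a b c hab hbc
      cases a <;> cases b <;> cases c <;>
        simp only [glueDown] at * <;>
        first
        | exact hab.elim
        | exact hbc.elim
        | exact le_trans hab hbc
        | exact ⟨le_trans hab hbc.1, hbc.2⟩
        | exact ⟨hab.1, le_trans hab.2 hbc⟩
    · intro a b hab hba
      cases a <;> cases b <;> simp_all [glueDown]
      · exact le_antisymm hab hba
      · exact le_antisymm hab hba
  · -- maps to
    intro K hK
    refine ⟨?_, ?_, ?_⟩
    · intro x hx y hyx
      simp only [Finset.mem_toLeft] at *
      exact hK _ hx _ hyx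
    · intro x hx y hyx
      simp only [Finset.mem_toRight] at *
      exact hK _ hx _ hyx
    · intro hxR
      simp only [Finset.mem_toLeft, Finset.mem_toRight] at *
      exact hK _ hxR (.inr yL) ⟨le_refl _, le_refl _⟩
  · -- inj on
    intro K _ K' _ h
    simp only [Prod.mk.injEq] at h
    rw [← Finset.toLeft_disjSum_toRight (u := K), ← Finset.toLeft_disjSum_toRight (u := K'),
      h.1, h.2]
  · -- surj on
    rintro ⟨I, J⟩ ⟨hI, hJ, hIJ⟩
    refine ⟨I.disjSum J, ?_, by simp⟩
    intro x hx y hyx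
    cases x <;> cases y <;> simp_all [glueDown]
    · exact hI _ hx _ hyx
    · exact hJ _ (hIJ (hI _ hx _ hyx.2)) _ hyx.1
    · exact hJ _ hx _ hyx
  · intro K _
    conv_lhs => rw [← Finset.toLeft_disjSum_toRight (u := K)]
    exact Finset.prod_disjSum _ _ _
end
end

section
/- Let (P, x_L, x_R) and (Q, y_L, y_R) be finite oriented posets. The relation defining the glued poset P↗Q on the disjoint union P ⊔ Q is a partial order, and the map sending a lower set K of P↗Q to the pair (K ∩ P, K ∩ Q) is a bijection from the set of lower sets of P↗Q onto the set of pairs (I, J) where I is a lower set of P, J is a lower set of Q, and y_L ∈ J implies x_R ∈ I; moreover, under this bijection the weight of K equals w_P(I) · w_Q(J). -/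
open Classical Relation

noncomputable section

variable {R : Type*} [CommRing R]

/-- The relation defining `P↗Q` is a partial order; `K ↦ (K ∩ P, K ∩ Q)`
is a bijection from lower sets of `P↗Q` onto pairs `(I, J)` of lower sets of `P` and `Q`
with `yL ∈ J → xR ∈ I`; and the weight of `K` is `wP(I) · wQ(J)`. -/
theorem glueUp_isPartialOrder_bijOn {α β : Type*} [Fintype α] [Fintype β]
    [PartialOrder α] [PartialOrder β] (wP : α → R) (wQ : β → R)
    (xL xR : α) (yL yR : β) :
    IsPartialOrder (α ⊕ β) (glueUp (· ≤ · : α → α → Prop) (· ≤ · : β → β → Prop) xR yL) ∧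
    Set.BijOn (fun K : Finset (α ⊕ β) => (K.toLeft, K.toRight))
      {K | IsLowerSetRel (glueUp (· ≤ · : α → α → Prop) (· ≤ · : β → β → Prop) xR yL) K}
      {p : Finset α × Finset β |
        IsLowerSetRel (· ≤ ·) p.1 ∧ IsLowerSetRel (· ≤ ·) p.2 ∧ (yL ∈ p.2 → xR ∈ p.1)} ∧
    ∀ K : Finset (α ⊕ β),
      IsLowerSetRel (glueUp (· ≤ · : α → α → Prop) (· ≤ · : β → β → Prop) xR yL) K →
        ∏ i ∈ K, Sum.elim wP wQ i =
          (∏ i ∈ K.toLeft, wP i) * ∏ j ∈ K.toRight, wQ j := by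
  constructor
  · exact
      { refl := by rintro (a|a) <;> simp [glueUp]
        trans := by
          rintro (a|a) (b|b) (c|c) hab hbc <;> simp [glueUp] at * <;>
            first
            | exact le_trans hab hbc
            | exact ⟨le_trans hab hbc.1, hbc.2⟩
            | exact ⟨hab.1, le_trans hab.2 hbc⟩
        antisymm := by
          rintro (a|a) (b|b) hab hba <;> simp [glueUp] at * <;>
            exact le_antisymm hab hba }
  constructor
  · refine ⟨?_, ?_, ?_⟩
    · rintro K hK
      refine ⟨?_, ?_, ?_⟩
      · intro x hx y hyx
        simp only [Finset.mem_toLeft] at *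
        exact hK _ hx _ (by simpa [glueUp] using hyx)
      · intro x hx y hyx
        simp only [Finset.mem_toRight] at *
        exact hK _ hx _ (by simpa [glueUp] using hyx)
      · intro hy
        simp only [Finset.mem_toLeft, Finset.mem_toRight] at *
        exact hK _ hy (.inl xR) (by simp [glueUp])
    · intro K _ K' _ h
      have h1 : K.toLeft = K'.toLeft := congrArg Prod.fst h
      have h2 : K.toRight = K'.toRight := congrArg Prod.snd h
      rw [← Finset.toLeft_disjSum_toRight (u := K), h1, h2,
        Finset.toLeft_disjSum_toRight]
    · rintro ⟨I, J⟩ ⟨hI, hJ, hIJ⟩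
      refine ⟨I.disjSum J, ?_, by simp⟩
      rintro (x|x) hx (y|y) hyx <;>
        simp only [Finset.inl_mem_disjSum, Finset.inr_mem_disjSum, glueUp] at *
      · exact hI _ hx _ hyx
      · exact hI _ (hIJ (hJ _ hx _ hyx.2)) _ hyx.1
      · exact hJ _ hx _ hyx
  · intro K _
    rw [← Finset.toLeft_disjSum_toRight (u := K), Finset.prod_disjSum,
      Finset.toLeft_disjSum_toRight]
    rfl
end
end

section
/- Let R be a commutative ring, let m ≥ 2, let ε(0), …, ε(m−1) be a non-constant sequence of directions in {up, down} indexed cyclically by Z/mZ, and let w : Z/mZ → R be a weight function. For each i set M_i = U(w(i)) if ε(i) = up and M_i = D(w(i)) if ε(i) = down. Then the weight polynomial of the circular fence poset CF(ε) with weights w equals the trace of the 2×2 matrix product M_0 · M_1 ⋯ M_{m−1}. -/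
open Classical Relation

set_option maxHeartbeats 1000000

noncomputable section

variable {R : Type*} [CommRing R]

/-- The matrix `D(x) = [[1+x, −x],[1, 0]]`. -/
def Dmat (x : R) : Matrix (Fin 2) (Fin 2) R := !![1 + x, -x; 1, 0]

/-- The matrix `U(x) = [[x, 1],[0, 1]]`. -/
def Umat (x : R) : Matrix (Fin 2) (Fin 2) R := !![x, 1; 0, 1]

/-- The generating relations of the circular fence poset `CF(ε)` on `Z/mZ`
(here `m = n + 2`, with `Fin (n+2)` and its cyclic addition as `Z/mZ`):
`i ≤ i+1` when `ε i = up` (`true`) and `i+1 ≤ i` when `ε i = down` (`false`). -/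
def cfenceStep {n : ℕ} (ε : Fin (n + 2) → Bool) : Fin (n + 2) → Fin (n + 2) → Prop :=
  fun a b => (ε a = true ∧ b = a + 1) ∨ (ε b = false ∧ a = b + 1)

namespace CFAux

variable {κ : Type*} [Fintype κ] [DecidableEq κ]

/-- Path expansion of an entry of a product of matrices. -/
lemma listProd_entry (g : ℕ → Matrix κ κ R) :
    ∀ (k : ℕ) (a b : κ),
      (List.ofFn fun i : Fin k => g i).prod a b =
        ∑ s : Fin k → κ,
          if (Fin.cons a s : Fin (k+1) → κ) (Fin.last k) = b then
            ∏ i : Fin k, g i ((Fin.cons a s : Fin (k+1) → κ) i.castSucc)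
              ((Fin.cons a s : Fin (k+1) → κ) i.succ)
          else 0 := by
  intro k
  induction k with
  | zero =>
      intro a b
      simp [Matrix.one_apply, eq_comm]
  | succ k ih =>
      intro a b
      have hofn : (List.ofFn fun i : Fin (k+1) => g i)
          = (List.ofFn fun i : Fin k => g i).concat (g k) := by
        rw [List.ofFn_succ']
        simp
      calc (List.ofFn fun i : Fin (k+1) => g i).prod a b
          = ∑ c : κ, (List.ofFn fun i : Fin k => g i).prod a c * g k c b := by
            rw [hofn, List.prod_concat, Matrix.mul_apply]
        _ = ∑ c : κ, ∑ s : Fin k → κ,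
              if (Fin.cons a s : Fin (k+1) → κ) (Fin.last k) = c then
                (∏ i : Fin k, g i ((Fin.cons a s : Fin (k+1) → κ) i.castSucc)
                  ((Fin.cons a s : Fin (k+1) → κ) i.succ)) * g k c b
              else 0 := by
            refine Finset.sum_congr rfl fun c _ => ?_
            rw [ih a c, Finset.sum_mul]
            exact Finset.sum_congr rfl fun s _ => by split <;> simp
        _ = ∑ s : Fin k → κ, ∑ c : κ,
              if (Fin.cons a s : Fin (k+1) → κ) (Fin.last k) = c then
                (∏ i : Fin k, g i ((Fin.cons a s : Fin (k+1) → κ) i.castSucc)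
                  ((Fin.cons a s : Fin (k+1) → κ) i.succ)) * g k c b
              else 0 := Finset.sum_comm
        _ = ∑ s : Fin k → κ,
              (∏ i : Fin k, g i ((Fin.cons a s : Fin (k+1) → κ) i.castSucc)
                  ((Fin.cons a s : Fin (k+1) → κ) i.succ))
                * g k ((Fin.cons a s : Fin (k+1) → κ) (Fin.last k)) b := by
            refine Finset.sum_congr rfl fun s _ => ?_
            rw [Finset.sum_ite_eq Finset.univ ((Fin.cons a s : Fin (k+1) → κ) (Fin.last k))
              (fun c => (∏ i : Fin k, g i ((Fin.cons a s : Fin (k+1) → κ) i.castSucc)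
                  ((Fin.cons a s : Fin (k+1) → κ) i.succ))
                * g k c b)]
            simp
        _ = ∑ p : κ × (Fin k → κ),
              if (Fin.cons a ((Fin.snocEquiv fun _ => κ) p) : Fin (k+2) → κ)
                  (Fin.last (k+1)) = b then
                ∏ i : Fin (k+1),
                  g i ((Fin.cons a ((Fin.snocEquiv fun _ => κ) p) : Fin (k+2) → κ) i.castSucc)
                    ((Fin.cons a ((Fin.snocEquiv fun _ => κ) p) : Fin (k+2) → κ) i.succ)
              else 0 := by
            rw [Fintype.sum_prod_type]
            rw [Finset.sum_comm]
            refine Finset.sum_congr rfl fun s _ => ?_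
            have key : ∀ c : κ,
                (if (Fin.cons a ((Fin.snocEquiv fun _ => κ) (c, s)) : Fin (k+2) → κ)
                    (Fin.last (k+1)) = b then
                  ∏ i : Fin (k+1),
                    g i ((Fin.cons a ((Fin.snocEquiv fun _ => κ) (c, s)) : Fin (k+2) → κ)
                        i.castSucc)
                      ((Fin.cons a ((Fin.snocEquiv fun _ => κ) (c, s)) : Fin (k+2) → κ) i.succ)
                else 0)
                = (if c = b then
                    (∏ i : Fin k, g i ((Fin.cons a s : Fin (k+1) → κ) i.castSucc)
                      ((Fin.cons a s : Fin (k+1) → κ) i.succ))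
                      * g k ((Fin.cons a s : Fin (k+1) → κ) (Fin.last k)) c
                   else 0) := by
              intro c
              have hq : (Fin.cons a ((Fin.snocEquiv fun _ => κ) (c, s)) : Fin (k+2) → κ)
                  = Fin.snoc (Fin.cons a s : Fin (k+1) → κ) c := by
                show (Fin.cons a (Fin.snoc s c : Fin (k+1) → κ) : Fin (k+2) → κ) = _
                exact Fin.cons_snoc_eq_snoc_cons a s c
              rw [hq, Fin.snoc_last]
              rcases eq_or_ne c b with h | h
              · rw [if_pos h, if_pos h]
                rw [Fin.prod_univ_castSucc]
                congr 1
                · refine Finset.prod_congr rfl fun i _ => ?_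
                  rw [Fin.succ_castSucc, Fin.snoc_castSucc, Fin.snoc_castSucc]
                  simp
                · rw [Fin.succ_last, Fin.snoc_last, Fin.snoc_castSucc]
                  simp
              · rw [if_neg h, if_neg h]
            simp only [key]
            rw [Finset.sum_ite_eq' Finset.univ b
              (fun c => (∏ i : Fin k, g i ((Fin.cons a s : Fin (k+1) → κ) i.castSucc)
                  ((Fin.cons a s : Fin (k+1) → κ) i.succ))
                * g k ((Fin.cons a s : Fin (k+1) → κ) (Fin.last k)) c)]
            simp
        _ = ∑ s : Fin (k+1) → κ,
              if (Fin.cons a s : Fin (k+2) → κ) (Fin.last (k+1)) = b then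
                ∏ i : Fin (k+1), g i ((Fin.cons a s : Fin (k+2) → κ) i.castSucc)
                  ((Fin.cons a s : Fin (k+2) → κ) i.succ)
              else 0 := by
            exact Equiv.sum_comp (Fin.snocEquiv fun _ => κ)
              (fun s => if (Fin.cons a s : Fin (k+2) → κ) (Fin.last (k+1)) = b then
                ∏ i : Fin (k+1), g i ((Fin.cons a s : Fin (k+2) → κ) i.castSucc)
                  ((Fin.cons a s : Fin (k+2) → κ) i.succ)
              else 0)


lemma snoc_succ_eq {k : ℕ} (t : Fin (k+1) → κ) (i : Fin (k+1)) :
    (Fin.snoc t (t 0) : Fin (k+2) → κ) i.succ = t (i + 1) := by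
  rcases eq_or_ne i (Fin.last k) with h | h
  · subst h
    rw [Fin.succ_last, Fin.snoc_last, Fin.last_add_one]
  · have hlt : i < Fin.last k := lt_of_le_of_ne (Fin.le_last i) h
    have hv : ((i + 1 : Fin (k+1)) : ℕ) = (i : ℕ) + 1 := Fin.val_add_one_of_lt hlt
    have hsucc : i.succ = Fin.castSucc (i + 1) := by
      ext
      simp [hv]
    rw [hsucc, Fin.snoc_castSucc]

/-- Trace of a product of matrices as a sum over cyclic paths. -/
lemma trace_listProd (g : ℕ → Matrix κ κ R) (k : ℕ) :
    Matrix.trace (List.ofFn fun i : Fin (k+1) => g i).prod =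
      ∑ t : Fin (k+1) → κ, ∏ i : Fin (k+1), g i (t i) (t (i + 1)) := by
  calc Matrix.trace (List.ofFn fun i : Fin (k+1) => g i).prod
      = ∑ a : κ, (List.ofFn fun i : Fin (k+1) => g i).prod a a := by
        simp [Matrix.trace, Matrix.diag]
    _ = ∑ a : κ, ∑ s : Fin (k+1) → κ,
          if (Fin.cons a s : Fin (k+2) → κ) (Fin.last (k+1)) = a then
            ∏ i : Fin (k+1), g i ((Fin.cons a s : Fin (k+2) → κ) i.castSucc) ((Fin.cons a s : Fin (k+2) → κ) i.succ)
          else 0 := by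
        exact Finset.sum_congr rfl fun a _ => listProd_entry g (k+1) a a
    _ = ∑ p : κ × (Fin (k+1) → κ),
          if (Fin.cons p.1 p.2 : Fin (k+2) → κ) (Fin.last (k+1)) = p.1 then
            ∏ i : Fin (k+1), g i ((Fin.cons p.1 p.2 : Fin (k+2) → κ) i.castSucc) ((Fin.cons p.1 p.2 : Fin (k+2) → κ) i.succ)
          else 0 :=
        (Fintype.sum_prod_type (f := fun p : κ × (Fin (k+1) → κ) =>
          if (Fin.cons p.1 p.2 : Fin (k+2) → κ) (Fin.last (k+1)) = p.1 then
            ∏ i : Fin (k+1), g i ((Fin.cons p.1 p.2 : Fin (k+2) → κ) i.castSucc)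
              ((Fin.cons p.1 p.2 : Fin (k+2) → κ) i.succ)
          else 0)).symm
    _ = ∑ q : Fin (k+2) → κ,
          if q (Fin.last (k+1)) = q 0 then
            ∏ i : Fin (k+1), g i (q i.castSucc) (q i.succ)
          else 0 := by
        refine Fintype.sum_equiv (Fin.consEquiv fun _ => κ) _ _ fun p => ?_
        have : (Fin.consEquiv fun _ => κ) p = (Fin.cons p.1 p.2 : Fin (k+2) → κ) := rfl
        rw [this, Fin.cons_zero]
    _ = ∑ p : κ × (Fin (k+1) → κ),
          if (Fin.snoc p.2 p.1 : Fin (k+2) → κ) (Fin.last (k+1))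
              = (Fin.snoc p.2 p.1 : Fin (k+2) → κ) 0 then
            ∏ i : Fin (k+1), g i ((Fin.snoc p.2 p.1 : Fin (k+2) → κ) i.castSucc)
              ((Fin.snoc p.2 p.1 : Fin (k+2) → κ) i.succ)
          else 0 := by
        refine (Fintype.sum_equiv (Fin.snocEquiv fun _ => κ) _ _ fun p => ?_).symm
        rfl
    _ = ∑ t : Fin (k+1) → κ, ∏ i : Fin (k+1), g i (t i) (t (i + 1)) := by
        rw [Fintype.sum_prod_type, Finset.sum_comm]
        refine Finset.sum_congr rfl fun t _ => ?_
        have key : ∀ c : κ,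
            (if (Fin.snoc t c : Fin (k+2) → κ) (Fin.last (k+1))
                = (Fin.snoc t c : Fin (k+2) → κ) 0 then
              ∏ i : Fin (k+1), g i ((Fin.snoc t c : Fin (k+2) → κ) i.castSucc)
                ((Fin.snoc t c : Fin (k+2) → κ) i.succ)
            else 0)
            = (if c = t 0 then
                ∏ i : Fin (k+1), g i (t i) ((Fin.snoc t c : Fin (k+2) → κ) i.succ)
               else 0) := by
          intro c
          have h0 : (Fin.snoc t c : Fin (k+2) → κ) 0 = t 0 := by
            rw [show (0 : Fin (k+2)) = Fin.castSucc 0 from rfl, Fin.snoc_castSucc]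
          rw [Fin.snoc_last, h0]
          rcases eq_or_ne c (t 0) with h | h
          · rw [if_pos h, if_pos h]
            exact Finset.prod_congr rfl fun i _ => by rw [Fin.snoc_castSucc]
          · rw [if_neg h, if_neg h]
        simp only [key]
        rw [Finset.sum_ite_eq' Finset.univ (t 0)
          (fun c => ∏ i : Fin (k+1), g i (t i) ((Fin.snoc t c : Fin (k+2) → κ) i.succ))]
        simp only [Finset.mem_univ, if_pos]
        exact Finset.prod_congr rfl fun i _ => by rw [snoc_succ_eq]

end CFAux

namespace CFAux2

/-- The raw transfer matrix of a single step. -/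
def Amat (b : Bool) (x : R) : Matrix (Fin 2) (Fin 2) R :=
  if b then !![x, x; 0, 1] else !![x, 0; 1, 1]

def Pm : Matrix (Fin 2) (Fin 2) R := !![1, 1; 0, 1]

def Qm : Matrix (Fin 2) (Fin 2) R := !![1, -1; 0, 1]

lemma hPQ : (Pm : Matrix (Fin 2) (Fin 2) R) * Qm = 1 := by
  ext i j
  fin_cases i <;> fin_cases j <;>
    simp [Pm, Qm, Matrix.mul_apply, Fin.sum_univ_two, Matrix.one_apply]

lemma hQP : (Qm : Matrix (Fin 2) (Fin 2) R) * Pm = 1 := by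
  ext i j
  fin_cases i <;> fin_cases j <;>
    simp [Pm, Qm, Matrix.mul_apply, Fin.sum_univ_two, Matrix.one_apply]

lemma conj_eq (b : Bool) (x : R) :
    (if b then Umat x else Dmat x) = Pm * Amat b x * Qm := by
  cases b <;>
  · ext i j
    fin_cases i <;> fin_cases j <;>
      simp [Pm, Qm, Amat, Umat, Dmat, Matrix.mul_apply, Fin.sum_univ_two] <;> ring

lemma prod_map_conj (l : List (Matrix (Fin 2) (Fin 2) R)) :
    (l.map fun X => Pm * X * Qm).prod = Pm * l.prod * Qm := by
  induction l with
  | nil => simp [hPQ]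
  | cons x l ih =>
      rw [List.map_cons, List.prod_cons, ih, List.prod_cons]
      have h : (Qm : Matrix (Fin 2) (Fin 2) R) * (Pm * (l.prod * Qm)) = l.prod * Qm := by
        rw [← Matrix.mul_assoc, hQP, Matrix.one_mul]
      simp only [Matrix.mul_assoc]
      rw [h]

/-- The local (edge) conditions for a lower set of a circular fence. -/
def OkSet {n : ℕ} (ε : Fin (n + 2) → Bool) (I : Finset (Fin (n + 2))) : Prop :=
  ∀ i : Fin (n + 2),
    (ε i = true → (i + 1 ∈ I → i ∈ I)) ∧ (ε i = false → (i ∈ I → i + 1 ∈ I))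

lemma lower_rtg_iff {α : Type*} (r : α → α → Prop) (I : Finset α) :
    IsLowerSetRel (ReflTransGen r) I ↔ IsLowerSetRel r I := by
  constructor
  · intro h x hx y hyx
    exact h x hx y (ReflTransGen.single hyx)
  · intro h x hx y hyx
    induction hyx using ReflTransGen.head_induction_on with
    | refl => exact hx
    | head hac _ ih => exact h _ ih _ hac

lemma lower_step_iff {n : ℕ} (ε : Fin (n + 2) → Bool) (I : Finset (Fin (n + 2))) :
    IsLowerSetRel (cfenceStep ε) I ↔ OkSet ε I := by
  constructor
  · intro h i
    refine ⟨fun hε hmem => h (i + 1) hmem i (Or.inl ⟨hε, rfl⟩),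
      fun hε hmem => h i hmem (i + 1) (Or.inr ⟨hε, rfl⟩)⟩
  · rintro h x hx y (⟨hε, hx1⟩ | ⟨hε, hy1⟩)
    · subst hx1
      exact (h y).1 hε hx
    · subst hy1
      exact (h x).2 hε hx

lemma fin2_cases (x : Fin 2) : x = 0 ∨ x = 1 := by
  fin_cases x <;> simp

/-- The encoding equivalence between subsets and `Fin 2`-valued functions. -/
def enc {m : ℕ} : (Fin m → Fin 2) ≃ Finset (Fin m) where
  toFun t := Finset.univ.filter (fun i => t i = 0)
  invFun I := fun i => if i ∈ I then 0 else 1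
  left_inv t := by
    funext i
    rcases fin2_cases (t i) with h | h <;> simp [h]
  right_inv I := by
    ext i
    by_cases h : i ∈ I <;> simp [h]

lemma mem_enc {m : ℕ} (t : Fin m → Fin 2) (i : Fin m) : i ∈ enc t ↔ t i = 0 := by
  simp [enc]

lemma amat_entry_ok {n : ℕ} (ε : Fin (n + 2) → Bool) (w : Fin (n + 2) → R)
    (t : Fin (n + 2) → Fin 2) (hOk : OkSet ε (enc t)) (i : Fin (n + 2)) :
    Amat (ε i) (w i) (t i) (t (i + 1)) = if t i = 0 then w i else 1 := by
  have h1 := (hOk i).1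
  have h2 := (hOk i).2
  rw [mem_enc, mem_enc] at h1 h2
  cases hε : ε i with
  | true =>
      rcases fin2_cases (t i) with h | h <;> rcases fin2_cases (t (i + 1)) with h' | h'
      · simp [Amat, h, h']
      · simp [Amat, h, h']
      · exfalso
        have := h1 hε h'
        rw [h] at this
        exact one_ne_zero this
      · simp [Amat, h, h']
  | false =>
      rcases fin2_cases (t i) with h | h <;> rcases fin2_cases (t (i + 1)) with h' | h'
      · simp [Amat, h, h']
      · exfalso
        have := h2 hε h
        rw [h'] at this
        exact one_ne_zero this
      · simp [Amat, h, h']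
      · simp [Amat, h, h']

lemma prod_amat_eq {n : ℕ} (ε : Fin (n + 2) → Bool) (w : Fin (n + 2) → R)
    (t : Fin (n + 2) → Fin 2) :
    (∏ i : Fin (n + 2), Amat (ε i) (w i) (t i) (t (i + 1)))
      = if OkSet ε (enc t) then ∏ i ∈ enc t, w i else 0 := by
  by_cases hOk : OkSet ε (enc t)
  · rw [if_pos hOk]
    rw [Finset.prod_congr rfl (fun i _ => amat_entry_ok ε w t hOk i)]
    rw [show (enc t : Finset (Fin (n+2))) = Finset.univ.filter (fun i => t i = 0) from rfl]
    rw [Finset.prod_filter]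
  · rw [if_neg hOk]
    rw [OkSet] at hOk
    obtain ⟨i, hi⟩ := not_forall.mp hOk
    refine Finset.prod_eq_zero (Finset.mem_univ i) ?_
    rcases not_and_or.mp hi with hi | hi
    · push_neg at hi
      obtain ⟨hε, hmem, hnmem⟩ := hi
      rw [mem_enc] at hmem hnmem
      have h1 : t i = 1 := (fin2_cases (t i)).resolve_left hnmem
      simp [Amat, hε, h1, hmem]
    · push_neg at hi
      obtain ⟨hε, hmem, hnmem⟩ := hi
      rw [mem_enc] at hmem hnmem
      have h1 : t (i + 1) = 1 := (fin2_cases (t (i + 1))).resolve_left hnmem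
      simp [Amat, hε, h1, hmem]

end CFAux2

/-- For `m = n + 2 ≥ 2` and a non-constant direction sequence `ε`,
the weight polynomial of the circular fence poset `CF(ε)` (whose order is generated by
`cfenceStep ε`) equals the trace of `M₀ ⋯ M_{m−1}`, where `Mᵢ = U(w i)` if
`ε i = up` and `Mᵢ = D(w i)` otherwise. -/
theorem circularFence_weightPoly_trace (n : ℕ) (ε : Fin (n + 2) → Bool)
    (hne : ∃ i j : Fin (n + 2), ε i ≠ ε j) (w : Fin (n + 2) → R) :
    wSum (ReflTransGen (cfenceStep ε)) w (fun _ => True) =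
      Matrix.trace
        ((List.ofFn fun i : Fin (n + 2) => if ε i then Umat (w i) else Dmat (w i)).prod) := by
  classical
  clear hne
  open CFAux CFAux2 in
  -- the ℕ-indexed transfer matrices
  set g : ℕ → Matrix (Fin 2) (Fin 2) R :=
    fun j => if h : j < n + 2 then Amat (ε ⟨j, h⟩) (w ⟨j, h⟩) else 1 with hg
  have hgi : ∀ i : Fin (n + 2), g (i : ℕ) = Amat (ε i) (w i) := by
    intro i
    rw [hg]
    simp only [i.isLt, dif_pos]
  -- Step 1: rewrite wSum via the local conditions
  have step1 : wSum (ReflTransGen (cfenceStep ε)) w (fun _ => True)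
      = ∑ I ∈ Finset.univ.filter (fun I : Finset (Fin (n + 2)) => OkSet ε I),
          ∏ i ∈ I, w i := by
    unfold wSum
    refine Finset.sum_congr ?_ fun _ _ => rfl
    ext I
    simp only [Finset.mem_filter, Finset.mem_univ, true_and, and_true]
    rw [lower_rtg_iff, lower_step_iff]
  have step1b : (∑ I ∈ Finset.univ.filter (fun I : Finset (Fin (n + 2)) => OkSet ε I),
          ∏ i ∈ I, w i)
      = ∑ I : Finset (Fin (n + 2)), if OkSet ε I then ∏ i ∈ I, w i else 0 :=
    Finset.sum_filter _ _
  -- Step 2: the sum over subsets as a path sum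
  have step2 : (∑ I : Finset (Fin (n + 2)), if OkSet ε I then ∏ i ∈ I, w i else 0)
      = ∑ t : Fin (n + 2) → Fin 2, ∏ i : Fin (n + 2), g (i : ℕ) (t i) (t (i + 1)) := by
    refine (Fintype.sum_equiv CFAux2.enc _ _ fun t => ?_).symm
    rw [← prod_amat_eq ε w t]
    exact Finset.prod_congr rfl fun i _ => by rw [hgi]
  -- Step 3: the path sum as a trace
  have step3 : (∑ t : Fin (n + 2) → Fin 2, ∏ i : Fin (n + 2), g (i : ℕ) (t i) (t (i + 1)))
      = Matrix.trace (List.ofFn fun i : Fin (n + 2) => g (i : ℕ)).prod :=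
    (trace_listProd g (n + 1)).symm
  -- Step 4: conjugation
  have step4 : Matrix.trace (List.ofFn fun i : Fin (n + 2) => g (i : ℕ)).prod
      = Matrix.trace
          ((List.ofFn fun i : Fin (n + 2) => if ε i then Umat (w i) else Dmat (w i)).prod) := by
    have hlist : (List.ofFn fun i : Fin (n + 2) => if ε i then Umat (w i) else Dmat (w i))
        = (List.ofFn fun i : Fin (n + 2) => g (i : ℕ)).map (fun X => Pm * X * Qm) := by
      rw [List.map_ofFn]
      refine congrArg _ (funext fun i => ?_)
      show (if ε i then Umat (w i) else Dmat (w i)) = Pm * g (i : ℕ) * Qm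
      rw [hgi, conj_eq]
    rw [hlist, prod_map_conj, Matrix.trace_mul_comm, ← Matrix.mul_assoc, hQP, Matrix.one_mul]
  rw [step1, step1b, step2, step3, step4]
end
end
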